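/- Let G be a finite compass φ-structure of size N featuring the ABB̄L̄-formula φ at the initial point (0,1). If there exist two compatible rows 0 < y0 < y1 < N in G, then there exists a finite compass φ-structure G' of size N' = N − y1 + y0 that features φ (at its initial point (0,1)). -/
import Mathlib


namespace ABBL

/-- Formulas of the interval temporal logic ABB̄L̄, built from propositional
variables (of type `P`) using negation, disjunction and the unary modal
operators ⟨A⟩, ⟨B⟩, ⟨B̄⟩, ⟨L̄⟩. -/
inductive Formula (P : Type) : Type
  | atom  : P → Formula P
  | neg   : Formula P → Formula P
  | or    : Formula P → Formula P → Formula P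
  | diaA  : Formula P → Formula P
  | diaB  : Formula P → Formula P
  | diaBb : Formula P → Formula P
  | diaLb : Formula P → Formula P

variable {P : Type}

/-- The set of subformulas of a formula. -/
def subf : Formula P → Set (Formula P)
  | .atom a   => {Formula.atom a}
  | .neg ψ    => insert (Formula.neg ψ) (subf ψ)
  | .or ψ χ   => insert (Formula.or ψ χ) (subf ψ ∪ subf χ)
  | .diaA ψ   => insert (Formula.diaA ψ) (subf ψ)
  | .diaB ψ   => insert (Formula.diaB ψ) (subf ψ)
  | .diaBb ψ  => insert (Formula.diaBb ψ) (subf ψ)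
  | .diaLb ψ  => insert (Formula.diaLb ψ) (subf ψ)

/-- The number `|φ|` of subformulas of `φ`. -/
noncomputable def numSub (φ : Formula P) : ℕ := (subf φ).ncard

/-- Negation, identifying `¬¬α` with `α`. -/
def negc : Formula P → Formula P
  | .neg ψ => ψ
  | ψ      => Formula.neg ψ

/-- The closure `Cl(φ)`: all subformulas of `φ` and their negations. -/
def Cl (φ : Formula P) : Set (Formula P) := subf φ ∪ negc '' subf φ

/-- The extended closure `Cl⁺(φ)`: `Cl(φ)` together with all formulas
`⟨R⟩α` and `¬⟨R⟩α` for `R ∈ {A,B,B̄,L̄}` and `α ∈ Cl(φ)`. -/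
def Clp (φ : Formula P) : Set (Formula P) :=
  Cl φ ∪ {ψ | ∃ α ∈ Cl φ,
    ψ = Formula.diaA α ∨ ψ = Formula.neg (Formula.diaA α) ∨
    ψ = Formula.diaB α ∨ ψ = Formula.neg (Formula.diaB α) ∨
    ψ = Formula.diaBb α ∨ ψ = Formula.neg (Formula.diaBb α) ∨
    ψ = Formula.diaLb α ∨ ψ = Formula.neg (Formula.diaLb α)}

/-- A `φ`-atom: a nonempty, maximal locally consistent subset of `Cl⁺(φ)`. -/
structure IsAtom (φ : Formula P) (F : Set (Formula P)) : Prop where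
  nonempty : F.Nonempty
  subset   : F ⊆ Clp φ
  negCond  : ∀ α ∈ Clp φ, (α ∈ F ↔ negc α ∉ F)
  orCond   : ∀ α β, Formula.or α β ∈ Clp φ → (Formula.or α β ∈ F ↔ α ∈ F ∨ β ∈ F)

/-- The observables of `F`: `Obs(F) = F ∩ Cl(φ)`. -/
def Obs (φ : Formula P) (F : Set (Formula P)) : Set (Formula P) := F ∩ Cl φ

/-- The `A`-requests of `F`. -/
def ReqA (φ : Formula P) (F : Set (Formula P)) : Set (Formula P) :=
  {α | α ∈ Cl φ ∧ Formula.diaA α ∈ F}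

/-- The `B`-requests of `F`. -/
def ReqB (φ : Formula P) (F : Set (Formula P)) : Set (Formula P) :=
  {α | α ∈ Cl φ ∧ Formula.diaB α ∈ F}

/-- The `B̄`-requests of `F`. -/
def ReqBb (φ : Formula P) (F : Set (Formula P)) : Set (Formula P) :=
  {α | α ∈ Cl φ ∧ Formula.diaBb α ∈ F}

/-- The `L̄`-requests of `F`. -/
def ReqLb (φ : Formula P) (F : Set (Formula P)) : Set (Formula P) :=
  {α | α ∈ Cl φ ∧ Formula.diaLb α ∈ F}

/-- The dependency relation `F →_A G`. -/
def DepA (φ : Formula P) (F G : Set (Formula P)) : Prop :=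
  ReqA φ F = Obs φ G ∪ ReqB φ G ∪ ReqBb φ G

/-- The dependency relation `F →_B G`. -/
def DepB (φ : Formula P) (F G : Set (Formula P)) : Prop :=
  (Obs φ F ∪ ReqBb φ F ⊆ ReqBb φ G) ∧
  (ReqBb φ G ⊆ Obs φ F ∪ ReqBb φ F ∪ ReqB φ F) ∧
  (Obs φ G ∪ ReqB φ G ⊆ ReqB φ F) ∧
  (ReqB φ F ⊆ Obs φ G ∪ ReqB φ G ∪ ReqBb φ G) ∧
  ReqLb φ F = ReqLb φ G

/-- The dependency relation `F →_L̄ G`. -/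
def DepLb (φ : Formula P) (F G : Set (Formula P)) : Prop :=
  Obs φ G ∪ ReqLb φ G ⊆ ReqLb φ F

/-! ### Interval structures and semantics -/

/-- Intervals `[x,y]` with `x < y` over a linear order `O`. -/
def Interval (O : Type) [LinearOrder O] : Type := {p : O × O // p.1 < p.2}

variable {O : Type} [LinearOrder O]

/-- Allen's "meets" relation: `[x,y] A [x',y']` iff `y = x'`. -/
def relA (I J : Interval O) : Prop := I.1.2 = J.1.1

/-- Allen's "begins" relation: `[x,y] B [x',y']` iff `x = x'` and `y' < y`. -/
def relB (I J : Interval O) : Prop := I.1.1 = J.1.1 ∧ J.1.2 < I.1.2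

/-- Allen's "begun by" relation: `[x,y] B̄ [x',y']` iff `x = x'` and `y < y'`. -/
def relBb (I J : Interval O) : Prop := I.1.1 = J.1.1 ∧ I.1.2 < J.1.2

/-- Allen's "before" relation: `[x,y] L̄ [x',y']` iff `y' < x`. -/
def relLb (I J : Interval O) : Prop := J.1.2 < I.1.1

/-- Satisfaction of a formula at an interval of an interval structure
`S = (I_O, σ)`, where `σ` is the labeling with sets of propositional variables. -/
def sat (σ : Interval O → Set P) : Formula P → Interval O → Prop
  | .atom a, I  => a ∈ σ I
  | .neg ψ, I   => ¬ sat σ ψ I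
  | .or ψ χ, I  => sat σ ψ I ∨ sat σ χ I
  | .diaA ψ, I  => ∃ J, relA I J ∧ sat σ ψ J
  | .diaB ψ, I  => ∃ J, relB I J ∧ sat σ ψ J
  | .diaBb ψ, I => ∃ J, relBb I J ∧ sat σ ψ J
  | .diaLb ψ, I => ∃ J, relLb I J ∧ sat σ ψ J

/-- A linear order is strongly discrete iff there are only finitely many
points between any two points. -/
def StronglyDiscrete (O : Type) [LinearOrder O] : Prop :=
  ∀ x y : O, (Set.Ioo x y).Finite

/-- The `φ`-type of an interval: the set of formulas of `Cl⁺(φ)` true at it. -/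
def TypeS (σ : Interval O → Set P) (φ : Formula P) (I : Interval O) : Set (Formula P) :=
  {α | α ∈ Clp φ ∧ sat σ α I}

/-! ### Compass structures over a linear order -/

/-- A (consistent and fulfilling) compass `φ`-structure over a linear order `O`:
a labeling of the points `(x,y)` with `x < y` (identified with intervals) by
`φ`-atoms, satisfying consistency and fulfillment. -/
structure IsCompass (φ : Formula P) (L : Interval O → Set (Formula P)) : Prop where
  isAtom : ∀ p, IsAtom φ (L p)
  consA  : ∀ p q, relA p q → DepA φ (L p) (L q)
  consB  : ∀ p q, relB p q → DepB φ (L p) (L q)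
  consLb : ∀ p q, relLb p q → DepLb φ (L p) (L q)
  fulA   : ∀ p, ∀ α ∈ ReqA φ (L p), ∃ q, relA p q ∧ α ∈ Obs φ (L q)
  fulB   : ∀ p, ∀ α ∈ ReqB φ (L p), ∃ q, relB p q ∧ α ∈ Obs φ (L q)
  fulBb  : ∀ p, ∀ α ∈ ReqBb φ (L p), ∃ q, relBb p q ∧ α ∈ Obs φ (L q)
  fulLb  : ∀ p, ∀ α ∈ ReqLb φ (L p), ∃ q, relLb p q ∧ α ∈ Obs φ (L q)

/-! ### Finite compass structures, over `O = {0,…,N−1}` -/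

/-- A finite compass structure of size `N` (consistency conditions only):
the points are the pairs `(x,y)` with `x < y < N`, and `L` gives the labeling
by `φ`-atoms. Consistency is required for the relations `A`, `B`, `L̄`. -/
structure IsPreCompass (φ : Formula P) (N : ℕ) (L : ℕ → ℕ → Set (Formula P)) : Prop where
  isAtom : ∀ x y, x < y → y < N → IsAtom φ (L x y)
  consA  : ∀ x y z, x < y → y < z → z < N → DepA φ (L x y) (L y z)
  consB  : ∀ x z y, x < z → z < y → y < N → DepB φ (L x y) (L x z)
  consLb : ∀ u v x y, u < v → v < x → x < y → y < N → DepLb φ (L x y) (L u v)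

/-- A (consistent and fulfilling) finite compass `φ`-structure of size `N`. -/
structure IsFinCompass (φ : Formula P) (N : ℕ) (L : ℕ → ℕ → Set (Formula P))
    extends IsPreCompass φ N L : Prop where
  fulA  : ∀ x y, x < y → y < N → ∀ α ∈ ReqA φ (L x y),
            ∃ z, y < z ∧ z < N ∧ α ∈ Obs φ (L y z)
  fulB  : ∀ x y, x < y → y < N → ∀ α ∈ ReqB φ (L x y),
            ∃ z, x < z ∧ z < y ∧ α ∈ Obs φ (L x z)
  fulBb : ∀ x y, x < y → y < N → ∀ α ∈ ReqBb φ (L x y),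
            ∃ z, y < z ∧ z < N ∧ α ∈ Obs φ (L x z)
  fulLb : ∀ x y, x < y → y < N → ∀ α ∈ ReqLb φ (L x y),
            ∃ u v, u < v ∧ v < x ∧ α ∈ Obs φ (L u v)

/-- The shading of row `y`: the set of atoms occurring on row `y`. -/
def Shading (L : ℕ → ℕ → Set (Formula P)) (y : ℕ) : Set (Set (Formula P)) :=
  {F | ∃ x, x < y ∧ L x y = F}

/-- The property (WIT) of a set of points `W` being a witness set for row `y`:
every `ψ ∈ Cl(φ)` appearing in the label of a point above row `y` has a witness
in `W` at minimal height above `y`. -/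
def WitProp (φ : Formula P) (N : ℕ) (L : ℕ → ℕ → Set (Formula P)) (y : ℕ)
    (W : Set (ℕ × ℕ)) : Prop :=
  (∀ p ∈ W, p.1 < p.2 ∧ p.2 < N ∧ y < p.2) ∧
  ∀ ψ ∈ Cl φ, (∃ x' y', x' < y' ∧ y' < N ∧ y < y' ∧ ψ ∈ L x' y') →
    ∃ p ∈ W, ψ ∈ L p.1 p.2 ∧
      ∀ x' y', x' < y' → y' < N → y < y' → y' < p.2 → negc ψ ∈ L x' y'

/-- A witness set for row `y`: a minimal set satisfying (WIT). -/
def IsWitSet (φ : Formula P) (N : ℕ) (L : ℕ → ℕ → Set (Formula P)) (y : ℕ)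
    (W : Set (ℕ × ℕ)) : Prop :=
  WitProp φ N L y W ∧ ∀ W' ⊆ W, WitProp φ N L y W' → W' = W

/-- `π_ȳ(S)`: the `x`-coordinates, smaller than `ȳ`, of the points in `S`. -/
def proj (ybar : ℕ) (S : Set (ℕ × ℕ)) : Set ℕ := {x | (∃ y, (x, y) ∈ S) ∧ x < ybar}

/-- Two rows `y0 < y1` of a finite compass structure are compatible. -/
def Compatible (φ : Formula P) (N : ℕ) (L : ℕ → ℕ → Set (Formula P))
    (y0 y1 : ℕ) : Prop :=
  Shading L y0 = Shading L y1 ∧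
  L (y0 - 1) y0 = L (y1 - 1) y1 ∧
  ∃ W, IsWitSet φ N L y1 W ∧
    ∃ w : ℕ → ℕ, Set.InjOn w (proj y1 W) ∧
      ∀ x ∈ proj y1 W, w x < y0 ∧ L x y1 = L (w x) y0

/-- `#(F,y)`: the number of points on row `y` labeled by `F`. -/
noncomputable def cnt (L : ℕ → ℕ → Set (Formula P)) (y : ℕ) (F : Set (Formula P)) : ℕ :=
  Set.ncard {x | x < y ∧ L x y = F}

/-- The characteristic function of row `y`: counts occurrences of each atom,
capped at `2|φ|`. -/
noncomputable def charFn (φ : Formula P) (L : ℕ → ℕ → Set (Formula P)) (y : ℕ)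
    (F : Set (Formula P)) : ℕ :=
  min (cnt L y F) (2 * numSub φ)

/-- The formula `ξ = φ ∨ ⟨B̄⟩φ ∨ ⟨A⟩φ ∨ ⟨A⟩⟨A⟩φ`. -/
def xi (φ : Formula P) : Formula P :=
  Formula.or (Formula.or (Formula.or φ (Formula.diaBb φ)) (Formula.diaA φ))
    (Formula.diaA (Formula.diaA φ))

/-! ### Partially fulfilling structures and compass generators -/

/-- A finite compass structure of size `N` is partially fulfilling: every
request of a point strictly below the top row `N-1` is either fulfilled or
transferred to the border. -/
def PartFulfilling (φ : Formula P) (N : ℕ) (L : ℕ → ℕ → Set (Formula P)) : Prop :=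
  ∀ x y, x < y → y < N - 1 →
    (∀ ψ ∈ ReqA φ (L x y),
        (∃ z, y < z ∧ z < N ∧ ψ ∈ Obs φ (L y z)) ∨ ψ ∈ ReqBb φ (L y (N - 1))) ∧
    (∀ ψ ∈ ReqB φ (L x y), ∃ z, x < z ∧ z < y ∧ ψ ∈ Obs φ (L x z)) ∧
    (∀ ψ ∈ ReqBb φ (L x y),
        (∃ z, y < z ∧ z < N ∧ ψ ∈ Obs φ (L x z)) ∨ ψ ∈ ReqBb φ (L x (N - 1))) ∧
    (∀ ψ ∈ ReqLb φ (L x y),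
        (∃ u v, u < v ∧ v < x ∧ ψ ∈ Obs φ (L u v)) ∨ ψ ∈ ReqLb φ (L 0 1))

/-- The defining property of a future witness set for row `y`. -/
def FutWitProp (φ : Formula P) (N : ℕ) (L : ℕ → ℕ → Set (Formula P)) (y : ℕ)
    (FW : Set ℕ) : Prop :=
  (∀ x ∈ FW, x < y) ∧
  ∀ F ∈ Shading L y, ∃ x ∈ FW, L x y = F ∧
    ∀ ψ ∈ ReqBb φ F, ∃ y', y < y' ∧ y' < N ∧ ψ ∈ Obs φ (L x y')

/-- A future witness set for row `y`: a minimal set satisfying `FutWitProp`. -/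
def IsFutWit (φ : Formula P) (N : ℕ) (L : ℕ → ℕ → Set (Formula P)) (y : ℕ)
    (FW : Set ℕ) : Prop :=
  FutWitProp φ N L y FW ∧ ∀ FW' ⊆ FW, FutWitProp φ N L y FW' → FW' = FW

/-- The defining property of a past witness set for row `y`. -/
def PastWitProp (φ : Formula P) (N : ℕ) (L : ℕ → ℕ → Set (Formula P)) (y : ℕ)
    (PW : Set (ℕ × ℕ)) : Prop :=
  (∀ p ∈ PW, p.1 < p.2 ∧ p.2 < N) ∧
  ∀ ψ ∈ ReqLb φ (L (y - 1) y), ∃ p ∈ PW, ψ ∈ Obs φ (L p.1 p.2) ∧ p.2 < y - 1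

/-- A past witness set for row `y`: a minimal set satisfying `PastWitProp`. -/
def IsPastWit (φ : Formula P) (N : ℕ) (L : ℕ → ℕ → Set (Formula P)) (y : ℕ)
    (PW : Set (ℕ × ℕ)) : Prop :=
  PastWitProp φ N L y PW ∧ ∀ PW' ⊆ PW, PastWitProp φ N L y PW' → PW' = PW

/-- Conditions (G1)–(G6) on the four distinguished rows of a compass generator. -/
structure GenRows (φ : Formula P) (N : ℕ) (L : ℕ → ℕ → Set (Formula P))
    (yφ y0 y1 y2 : ℕ) : Prop where
  rowφpos : 0 < yφ
  rowφlt  : yφ < N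
  row0pos : 0 < y0
  row2lt  : y2 < N
  g1a : y0 < y1
  g1b : y1 < y2
  g1c : y0 ≤ yφ
  g2  : φ ∈ L (yφ - 1) yφ ∨ Formula.diaBb φ ∈ L (yφ - 1) yφ
  g3a : Shading L y1 ⊆ Shading L y0
  g3b : L (y0 - 1) y0 = L (y1 - 1) y1
  g4  : ∃ PW, IsPastWit φ N L y1 PW ∧ ∀ x ∈ proj y1 PW, y0 ≤ x
  g5a : Shading L (N - 1) ⊆ Shading L y2
  g5b : L (y2 - 1) y2 = L (N - 2) (N - 1)
  g6  : ∃ FW, IsFutWit φ N L y2 FW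

/-- A compass generator for `φ`: a finite, partially fulfilling compass
structure admitting four rows satisfying (G1)–(G6). -/
structure IsCompassGen (φ : Formula P) (N : ℕ) (L : ℕ → ℕ → Set (Formula P)) : Prop where
  pre     : IsPreCompass φ N L
  partFul : PartFulfilling φ N L
  rows    : ∃ yφ y0 y1 y2, GenRows φ N L yφ y0 y1 y2

/-- Global compatibility of two rows `y < y'` of a compass generator with
distinguished rows `yφ, y0, y1, y2`. -/
def GlobCompatible (φ : Formula P) (N : ℕ) (L : ℕ → ℕ → Set (Formula P))
    (yφ y0 y1 y2 y y' : ℕ) : Prop :=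
  L (y - 1) y = L (y' - 1) y' ∧ Shading L y = Shading L y' ∧
  (∀ ybar ∈ ({yφ, y0, y1, y2} : Set ℕ), ¬ (y ≤ ybar ∧ ybar ≤ y')) ∧
  ∃ PW FW,
    IsPastWit φ N L y1 PW ∧
    (∀ p ∈ PW, ¬ (y ≤ p.2 ∧ p.2 ≤ y')) ∧
    IsFutWit φ N L y2 FW ∧
    (∀ xbar ∈ FW, ∀ ψ ∈ ReqBb φ (L xbar y2),
      ∃ ybar, y2 < ybar ∧ ybar < N ∧ ψ ∈ Obs φ (L xbar ybar) ∧ ¬ (y ≤ ybar ∧ ybar ≤ y')) ∧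
    ∃ W, IsWitSet φ N L y' W ∧
      ∃ w : ℕ → ℕ,
        Set.InjOn w (proj y' (W ∪ PW ∪ (fun x => (x, y2)) '' FW)) ∧
        (∀ x ∈ proj y' (W ∪ PW ∪ (fun x => (x, y2)) '' FW),
          w x < y ∧ L x y' = L (w x) y) ∧
        (∀ x ∈ proj y' PW, w x = x)


/-- `DepB` preserves the set `Obs ∪ ReqB ∪ ReqB̄`. -/
theorem depB_stuff {P : Type} {φ : Formula P} {F G : Set (Formula P)} (h : DepB φ F G) :
    Obs φ F ∪ ReqB φ F ∪ ReqBb φ F = Obs φ G ∪ ReqB φ G ∪ ReqBb φ G := by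
  obtain ⟨h1, h2, h3, h4, h5⟩ := h
  ext a
  constructor
  · rintro ((ha | ha) | ha)
    · exact Or.inr (h1 (Or.inl ha))
    · rcases h4 ha with (h | h) | h
      · exact Or.inl (Or.inl h)
      · exact Or.inl (Or.inr h)
      · exact Or.inr h
    · exact Or.inr (h1 (Or.inr ha))
  · rintro ((ha | ha) | ha)
    · exact Or.inl (Or.inr (h3 (Or.inl ha)))
    · exact Or.inl (Or.inr (h3 (Or.inr ha)))
    · rcases h2 ha with (h | h) | h
      · exact Or.inl (Or.inl h)
      · exact Or.inr h
      · exact Or.inl (Or.inr h)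

/-- The dependency relation `DepB` is transitive. -/
theorem depB_trans {P : Type} {φ : Formula P} {F G H : Set (Formula P)}
    (hFG : DepB φ F G) (hGH : DepB φ G H) : DepB φ F H := by
  obtain ⟨a1, a2, a3, a4, a5⟩ := hFG
  obtain ⟨b1, b2, b3, b4, b5⟩ := hGH
  refine ⟨fun x hx => b1 (Or.inr (a1 hx)), ?_, ?_, ?_, a5.trans b5⟩
  · intro x hx
    rcases b2 hx with (h | h) | h
    · exact Or.inr (a3 (Or.inl h))
    · exact a2 h
    · exact Or.inr (a3 (Or.inr h))
  · intro x hx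
    exact a3 (Or.inr (b3 hx))
  · intro x hx
    rcases a4 hx with (h | h) | h
    · exact Or.inr (b1 (Or.inl h))
    · exact b4 h
    · exact Or.inr (b1 (Or.inr h))

/-- If a finite compass `φ`-structure of size `N` featuring `φ`
at the initial point `(0,1)` has two compatible rows `0 < y0 < y1 < N`, then there
is a finite compass `φ`-structure of size `N − y1 + y0` featuring `φ` at `(0,1)`. -/
theorem contraction_finite {P : Type} (φ : Formula P) (N : ℕ)
    (L : ℕ → ℕ → Set (Formula P)) (hN : 1 < N)
    (hG : IsFinCompass φ N L) (hfeat : φ ∈ L 0 1)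
    (y0 y1 : ℕ) (hy0 : 0 < y0) (hy01 : y0 < y1) (hy1 : y1 < N)
    (hcomp : Compatible φ N L y0 y1) :
    ∃ L' : ℕ → ℕ → Set (Formula P),
      IsFinCompass φ (N - y1 + y0) L' ∧ φ ∈ L' 0 1 := by
  classical
  obtain ⟨hshad, hbord, W, hWit, w, hwinj, hwmap⟩ := hcomp
  obtain ⟨⟨hWdom, hWcov⟩, -⟩ := hWit
  set δ := y1 - y0 with hδ
  set N' := N - y1 + y0 with hN'
  have hy0N : y0 < N := by omega
  have hy0N' : y0 < N' := by omega
  -- shading helpers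
  have hsh10 : ∀ u, u < y1 → ∃ u2, u2 < y0 ∧ L u2 y0 = L u y1 := by
    intro u hu
    have h : L u y1 ∈ Shading L y1 := ⟨u, hu, rfl⟩
    rw [← hshad] at h
    exact h
  have hsh01 : ∀ x, x < y0 → ∃ u, u < y1 ∧ L u y1 = L x y0 := by
    intro x hx
    have h : L x y0 ∈ Shading L y0 := ⟨x, hx, rfl⟩
    rw [hshad] at h
    exact h
  -- the column remapping for low columns
  have hcex : ∀ x : ℕ, ∃ u : ℕ, x < y0 →
      u < y1 ∧ L u y1 = L x y0 ∧ ∀ t ∈ proj y1 W, w t = x → t = u := by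
    intro x
    by_cases hx : x < y0
    · by_cases hw : ∃ t ∈ proj y1 W, w t = x
      · obtain ⟨t, ht, hwt⟩ := hw
        refine ⟨t, fun _ => ⟨ht.2, ?_, ?_⟩⟩
        · rw [(hwmap t ht).2, hwt]
        · intro t' ht' hwt'
          exact hwinj ht' ht (hwt'.trans hwt.symm)
      · obtain ⟨u, hu1, hu2⟩ := hsh01 x hx
        exact ⟨u, fun _ => ⟨hu1, hu2, fun t ht hwt => absurd ⟨t, ht, hwt⟩ hw⟩⟩
    · exact ⟨0, fun h => absurd h hx⟩
  choose c hc using hcex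
  have hclt : ∀ x, x < y0 → c x < y1 := fun x hx => (hc x hx).1
  have hceq : ∀ x, x < y0 → L (c x) y1 = L x y0 := fun x hx => (hc x hx).2.1
  have hcw : ∀ t ∈ proj y1 W, c (w t) = t := by
    intro t ht
    exact ((hc (w t) (hwmap t ht).1).2.2 t ht rfl).symm
  set m : ℕ → ℕ := fun x => if x < y0 then c x else x + δ with hm
  have hmlow : ∀ x, x < y0 → m x = c x := by
    intro x hx; simp [hm, hx]
  have hmhigh : ∀ x, ¬ x < y0 → m x = x + δ := by
    intro x hx; simp [hm, hx]
  have hmxy : ∀ x y, x < y → y0 < y → m x < y + δ := by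
    intro x y hxy hy
    by_cases hx : x < y0
    · have := hclt x hx; rw [hmlow x hx]; omega
    · rw [hmhigh x hx]; omega
  set L' : ℕ → ℕ → Set (Formula P) :=
    fun x y => if y ≤ y0 then L x y else L (m x) (y + δ) with hL'
  have hLlow : ∀ x y, y ≤ y0 → L' x y = L x y := by
    intro x y h; simp [hL', h]
  have hLhigh : ∀ x y, y0 < y → L' x y = L (m x) (y + δ) := by
    intro x y h; simp [hL', show ¬ y ≤ y0 by omega]
  -- junction consistency
  have hK1 : ∀ x z Y, x < z → z ≤ y0 → y1 < Y → Y < N → DepB φ (L (m x) Y) (L x z) := by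
    intro x z Y hxz hz hY1 hYN
    have hx0 : x < y0 := by omega
    rw [hmlow x hx0]
    have h1 : DepB φ (L (c x) Y) (L (c x) y1) := hG.consB (c x) y1 Y (hclt x hx0) hY1 hYN
    rw [hceq x hx0] at h1
    rcases eq_or_lt_of_le hz with heq | hzlt
    · rw [heq]; exact h1
    · exact depB_trans h1 (hG.consB x z y0 hxz hzlt hy0N)
  have hcol : ∀ x Y, x < y0 → y1 < Y → Y < N →
      ReqLb φ (L (m x) Y) = ReqLb φ (L x y0) := by
    intro x Y hx hY1 hYN
    exact (hK1 x y0 Y hx le_rfl hY1 hYN).2.2.2.2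
  -- transferring observations above the deleted band, using the witness set
  have hHIGH : ∀ α u v, u < v → v < N → y1 < v → α ∈ Obs φ (L u v) →
      ∃ u' v', u' < v' ∧ y0 < v' ∧ v' + δ ≤ v ∧ α ∈ Obs φ (L' u' v') := by
    intro α u v huv hvN hv1 hα
    have hαCl : α ∈ Cl φ := hα.2
    have hαL : α ∈ L u v := hα.1
    obtain ⟨p, hpW, hpα, hpmin⟩ := hWcov α hαCl ⟨u, v, huv, hvN, hv1, hαL⟩
    obtain ⟨hp12, hp2N, hp2y1⟩ := hWdom p hpW
    have hp2v : p.2 ≤ v := by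
      by_contra hcon
      push_neg at hcon
      have hneg := hpmin u v huv hvN hv1 hcon
      have hAt := hG.isAtom u v huv hvN
      exact (hAt.negCond α (Set.mem_union_left _ hαCl)).mp hαL hneg
    by_cases hp1 : p.1 < y1
    · have hproj : p.1 ∈ proj y1 W := ⟨⟨p.2, by rw [Prod.mk.eta]; exact hpW⟩, hp1⟩
      have hw0 := (hwmap p.1 hproj).1
      refine ⟨w p.1, p.2 - δ, by omega, by omega, by omega, ?_⟩
      rw [hLhigh (w p.1) (p.2 - δ) (by omega), hmlow (w p.1) hw0, hcw p.1 hproj,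
        show p.2 - δ + δ = p.2 by omega]
      exact ⟨hpα, hαCl⟩
    · refine ⟨p.1 - δ, p.2 - δ, by omega, by omega, by omega, ?_⟩
      rw [hLhigh (p.1 - δ) (p.2 - δ) (by omega), hmhigh (p.1 - δ) (by omega),
        show p.1 - δ + δ = p.1 by omega, show p.2 - δ + δ = p.2 by omega]
      exact ⟨hpα, hαCl⟩
  -- transferring observations inside the deleted band, using the shading
  have hLOWlt : ∀ α u v, u < v → v < y1 → α ∈ Obs φ (L u v) →
      ∃ u' v', u' < v' ∧ v' < y0 ∧ α ∈ Obs φ (L u' v') := by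
    intro α u v huv hv1 hα
    obtain ⟨hB1, hB2, hB3, hB4, hB5⟩ := hG.consB u v y1 huv hv1 hy1
    have hαB : α ∈ ReqB φ (L u y1) := hB3 (Set.mem_union_left _ hα)
    obtain ⟨u3, hu3, heq⟩ := hsh10 u (lt_trans huv hv1)
    rw [← heq] at hαB
    obtain ⟨z, hz1, hz2, hz3⟩ := hG.fulB u3 y0 hu3 hy0N α hαB
    exact ⟨u3, z, hz1, hz2, hz3⟩
  have hLOW : ∀ α u v, u < v → y0 ≤ v → v ≤ y1 → α ∈ Obs φ (L u v) →
      ∃ u' v', u' < v' ∧ v' < y0 ∧ α ∈ Obs φ (L u' v') := by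
    intro α u v huv hv0 hv1 hα
    rcases lt_or_eq_of_le hv1 with hlt | heq
    · exact hLOWlt α u v huv hlt hα
    · obtain ⟨u2, hu2, heq2⟩ := hsh10 u (by omega)
      have hα2 : α ∈ Obs φ (L u2 y0) := by rw [heq2, ← heq]; exact hα
      exact hLOWlt α u2 y0 hu2 hy01 hα2
  refine ⟨L', ⟨⟨?_, ?_, ?_, ?_⟩, ?_, ?_, ?_, ?_⟩, ?_⟩
  -- isAtom
  · intro x y hxy hyN'
    by_cases hy : y ≤ y0
    · rw [hLlow x y hy]; exact hG.isAtom x y hxy (by omega)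
    · rw [hLhigh x y (by omega)]
      exact hG.isAtom _ _ (hmxy x y hxy (by omega)) (by omega)
  -- consA
  · intro x y z hxy hyz hzN'
    by_cases hz : z ≤ y0
    · rw [hLlow x y (by omega), hLlow y z hz]
      exact hG.consA x y z hxy hyz (by omega)
    · push_neg at hz
      by_cases hy : y ≤ y0
      · rw [hLlow x y hy, hLhigh y z (by omega)]
        rcases lt_or_eq_of_le hy with hylt | hyeq
        · have h0 : ReqA φ (L x y) =
              Obs φ (L y y0) ∪ ReqB φ (L y y0) ∪ ReqBb φ (L y y0) :=
            hG.consA x y y0 hxy hylt hy0N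
          have h1 : Obs φ (L (m y) (z + δ)) ∪ ReqB φ (L (m y) (z + δ)) ∪
                ReqBb φ (L (m y) (z + δ)) =
              Obs φ (L y y0) ∪ ReqB φ (L y y0) ∪ ReqBb φ (L y y0) :=
            depB_stuff (hK1 y y0 (z + δ) hylt le_rfl (by omega) (by omega))
          show ReqA φ (L x y) = _
          rw [h0, h1]
        · subst hyeq
          obtain ⟨x'', hx''1, heqx⟩ := hsh01 x hxy
          have h0 : DepA φ (L x'' y1) (L y1 (z + δ)) :=
            hG.consA x'' y1 (z + δ) hx''1 (by omega) (by omega)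
          have hmy : m y = y1 := by rw [hmhigh y (by omega)]; omega
          rw [hmy, ← heqx]
          exact h0
      · push_neg at hy
        rw [hLhigh x y hy, hLhigh y z (by omega), hmhigh y (by omega)]
        exact hG.consA (m x) (y + δ) (z + δ) (hmxy x y hxy hy) (by omega) (by omega)
  -- consB
  · intro x z y hxz hzy hyN'
    by_cases hy : y ≤ y0
    · rw [hLlow x y hy, hLlow x z (by omega)]
      exact hG.consB x z y hxz hzy (by omega)
    · push_neg at hy
      by_cases hz : z ≤ y0
      · rw [hLhigh x y hy, hLlow x z hz]
        exact hK1 x z (y + δ) hxz hz (by omega) (by omega)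
      · push_neg at hz
        rw [hLhigh x y hy, hLhigh x z hz]
        exact hG.consB (m x) (z + δ) (y + δ) (hmxy x z hxz hz) (by omega) (by omega)
  -- consLb
  · intro u v x y huv hvx hxy hyN'
    by_cases hy : y ≤ y0
    · rw [hLlow x y hy, hLlow u v (by omega)]
      exact hG.consLb u v x y huv hvx hxy (by omega)
    · push_neg at hy
      by_cases hv : v ≤ y0
      · rw [hLhigh x y hy, hLlow u v hv]
        by_cases hx : x < y0
        · show Obs φ (L u v) ∪ ReqLb φ (L u v) ⊆ ReqLb φ (L (m x) (y + δ))
          rw [hcol x (y + δ) hx (by omega) (by omega)]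
          exact hG.consLb u v x y0 huv hvx hx hy0N
        · rw [hmhigh x hx]
          exact hG.consLb u v (x + δ) (y + δ) huv (by omega) (by omega) (by omega)
      · push_neg at hv
        rw [hLhigh x y hy, hLhigh u v hv]
        have hxx : ¬ x < y0 := by omega
        refine hG.consLb (m u) (v + δ) (m x) (y + δ) (hmxy u v huv hv) ?_ ?_ (by omega)
        · rw [hmhigh x hxx]; omega
        · rw [hmhigh x hxx]; omega
  -- fulA
  · intro x y hxy hyN' α hα
    by_cases hy : y ≤ y0
    · rw [hLlow x y hy] at hα
      rcases lt_or_eq_of_le hy with hylt | hyeq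
      · have h0 : ReqA φ (L x y) =
            Obs φ (L y y0) ∪ ReqB φ (L y y0) ∪ ReqBb φ (L y y0) :=
          hG.consA x y y0 hxy hylt hy0N
        rw [h0] at hα
        rcases hα with (hα | hα) | hα
        · exact ⟨y0, hylt, by omega, by rw [hLlow y y0 le_rfl]; exact hα⟩
        · obtain ⟨z, h1, h2, h3⟩ := hG.fulB y y0 hylt hy0N α hα
          exact ⟨z, h1, by omega, by rw [hLlow y z (by omega)]; exact h3⟩
        · have hcy : α ∈ ReqBb φ (L (c y) y1) := by rw [hceq y hylt]; exact hα
          obtain ⟨Z, h1, h2, h3⟩ := hG.fulBb (c y) y1 (hclt y hylt) hy1 α hcy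
          refine ⟨Z - δ, by omega, by omega, ?_⟩
          rw [hLhigh y (Z - δ) (by omega), hmlow y hylt, show Z - δ + δ = Z by omega]
          exact h3
      · subst hyeq
        obtain ⟨x'', hx''1, heqx⟩ := hsh01 x hxy
        rw [← heqx] at hα
        by_cases hN1 : y1 < N - 1
        · have h0 : ReqA φ (L x'' y1) =
              Obs φ (L y1 (N - 1)) ∪ ReqB φ (L y1 (N - 1)) ∪ ReqBb φ (L y1 (N - 1)) :=
            hG.consA x'' y1 (N - 1) hx''1 hN1 (by omega)
          rw [h0] at hα
          rcases hα with (hα | hα) | hα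
          · refine ⟨N' - 1, by omega, by omega, ?_⟩
            rw [hLhigh y (N' - 1) (by omega), hmhigh y (by omega),
              show N' - 1 + δ = N - 1 by omega, show y + δ = y1 by omega]
            exact hα
          · obtain ⟨z, hz1, hz2, hz3⟩ := hG.fulB y1 (N - 1) hN1 (by omega) α hα
            refine ⟨z - δ, by omega, by omega, ?_⟩
            rw [hLhigh y (z - δ) (by omega), hmhigh y (by omega),
              show z - δ + δ = z by omega, show y + δ = y1 by omega]
            exact hz3
          · obtain ⟨Z, hZ1, hZ2, -⟩ := hG.fulBb y1 (N - 1) hN1 (by omega) α hα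
            exact absurd hZ2 (by omega)
        · obtain ⟨z, hz1, hz2, -⟩ := hG.fulA x'' y1 hx''1 hy1 α hα
          exact absurd hz2 (by omega)
    · push_neg at hy
      rw [hLhigh x y hy] at hα
      obtain ⟨z, hz1, hz2, hz3⟩ := hG.fulA (m x) (y + δ) (hmxy x y hxy hy) (by omega) α hα
      refine ⟨z - δ, by omega, by omega, ?_⟩
      rw [hLhigh y (z - δ) (by omega), hmhigh y (by omega),
        show z - δ + δ = z by omega]
      exact hz3
  -- fulB
  · intro x y hxy hyN' α hα
    by_cases hy : y ≤ y0
    · rw [hLlow x y hy] at hα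
      obtain ⟨z, h1, h2, h3⟩ := hG.fulB x y hxy (by omega) α hα
      exact ⟨z, h1, h2, by rw [hLlow x z (by omega)]; exact h3⟩
    · push_neg at hy
      rw [hLhigh x y hy] at hα
      obtain ⟨z, h1, h2, h3⟩ := hG.fulB (m x) (y + δ) (hmxy x y hxy hy) (by omega) α hα
      by_cases hz1 : y1 < z
      · refine ⟨z - δ, ?_, by omega, ?_⟩
        · rcases lt_or_ge x y0 with hx | hx
          · omega
          · have := hmhigh x (by omega); omega
        · rw [hLhigh x (z - δ) (by omega), show z - δ + δ = z by omega]
          exact h3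
      · push_neg at hz1
        have hx : x < y0 := by
          by_contra hx
          have := hmhigh x hx
          omega
        rw [hmlow x hx] at h1 h3
        rcases lt_or_eq_of_le hz1 with hzlt | hzeq
        · obtain ⟨hB1, hB2, hB3, hB4, hB5⟩ := hG.consB (c x) z y1 h1 hzlt hy1
          have hα2 : α ∈ ReqB φ (L (c x) y1) := hB3 (Set.mem_union_left _ h3)
          rw [hceq x hx] at hα2
          obtain ⟨z', h1', h2', h3'⟩ := hG.fulB x y0 hx hy0N α hα2
          exact ⟨z', h1', by omega, by rw [hLlow x z' (by omega)]; exact h3'⟩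
        · rw [hzeq, hceq x hx] at h3
          exact ⟨y0, hx, by omega, by rw [hLlow x y0 le_rfl]; exact h3⟩
  -- fulBb
  · intro x y hxy hyN' α hα
    by_cases hy : y ≤ y0
    · rw [hLlow x y hy] at hα
      have hx : x < y0 := by omega
      have hα0 : α ∈ ReqBb φ (L x y0) ∨ ∃ Z, y < Z ∧ Z ≤ y0 ∧ α ∈ Obs φ (L x Z) := by
        rcases lt_or_eq_of_le hy with hylt | hyeq
        · obtain ⟨Z, h1, h2, h3⟩ := hG.fulBb x y hxy (by omega) α hα
          rcases le_or_gt Z y0 with hZ | hZ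
          · exact Or.inr ⟨Z, h1, hZ, h3⟩
          · have hB := hG.consB x y0 Z hx hZ h2
            exact Or.inl (hB.1 (Set.mem_union_left _ h3))
        · rw [hyeq] at hα; exact Or.inl hα
      rcases hα0 with hα0 | ⟨Z, h1, h2, h3⟩
      · have hα1 : α ∈ ReqBb φ (L (c x) y1) := by rw [hceq x hx]; exact hα0
        obtain ⟨Z, h1, h2, h3⟩ := hG.fulBb (c x) y1 (hclt x hx) hy1 α hα1
        refine ⟨Z - δ, by omega, by omega, ?_⟩
        rw [hLhigh x (Z - δ) (by omega), hmlow x hx, show Z - δ + δ = Z by omega]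
        exact h3
      · exact ⟨Z, h1, by omega, by rw [hLlow x Z h2]; exact h3⟩
    · push_neg at hy
      rw [hLhigh x y hy] at hα
      obtain ⟨Z, h1, h2, h3⟩ := hG.fulBb (m x) (y + δ) (hmxy x y hxy hy) (by omega) α hα
      refine ⟨Z - δ, by omega, by omega, ?_⟩
      rw [hLhigh x (Z - δ) (by omega), show Z - δ + δ = Z by omega]
      exact h3
  -- fulLb
  · intro x y hxy hyN' α hα
    by_cases hy : y ≤ y0
    · rw [hLlow x y hy] at hα
      obtain ⟨u, v, h1, h2, h3⟩ := hG.fulLb x y hxy (by omega) α hα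
      exact ⟨u, v, h1, h2, by rw [hLlow u v (by omega)]; exact h3⟩
    · push_neg at hy
      rw [hLhigh x y hy] at hα
      by_cases hx : x < y0
      · rw [hcol x (y + δ) hx (by omega) (by omega)] at hα
        obtain ⟨u, v, h1, h2, h3⟩ := hG.fulLb x y0 hx hy0N α hα
        exact ⟨u, v, h1, h2, by rw [hLlow u v (by omega)]; exact h3⟩
      · rw [hmhigh x hx] at hα
        obtain ⟨u, v, h1, h2, h3⟩ := hG.fulLb (x + δ) (y + δ) (by omega) (by omega) α hα
        rcases lt_or_ge v y0 with hv | hv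
        · exact ⟨u, v, h1, by omega, by rw [hLlow u v (by omega)]; exact h3⟩
        · rcases le_or_gt v y1 with hv1 | hv1
          · obtain ⟨u', v', h1', h2', h3'⟩ := hLOW α u v h1 hv hv1 h3
            exact ⟨u', v', h1', by omega, by rw [hLlow u' v' (by omega)]; exact h3'⟩
          · obtain ⟨u', v', h1', h2', h3', h4'⟩ := hHIGH α u v h1 (by omega) hv1 h3
            exact ⟨u', v', h1', by omega, h4'⟩
  -- the initial point
  · rw [hLlow 0 1 (by omega)]
    exact hfeat

end ABBL
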